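/- Let N = nm with n, m coprime integers both ≥ 2, where m is odd and not divisible by 3. Then there exists an integer k with 1 ≤ k ≤ N-1, gcd(k,N) = 1, such that the k̄-monomial minimal solution modulo N is reducible, of size 6m if n > 2, and of size 3m if n = 2. -/

import Mathlib

def matE {N : ℕ} (a : ZMod N) : Matrix (Fin 2) (Fin 2) (ZMod N) := !![a, -1; 1, 0]

/-- `M_m(k,…,k) = ±Id` over `ℤ/Nℤ` (constant tuple, so a matrix power). -/
def isMonSol {N : ℕ} (k : ZMod N) (m : ℕ) : Prop :=
  matE k ^ m = 1 ∨ matE k ^ m = -1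

/-- `r` is the size of the `k`-monomial minimal solution modulo `N`. -/
def minMonSize {N : ℕ} (k : ZMod N) (r : ℕ) : Prop :=
  0 < r ∧ isMonSol k r ∧ ∀ m, 0 < m → isMonSol k m → r ≤ m

/-- `M_n(a₁,…,aₙ)` for a tuple given as a list. -/
def Mlist {N : ℕ} (l : List (ZMod N)) : Matrix (Fin 2) (Fin 2) (ZMod N) :=
  (l.map matE).reverse.prod

/-- A tuple is a solution of `(E_N)` if its matrix equals `±Id`. -/
def IsSolL {N : ℕ} (l : List (ZMod N)) : Prop := Mlist l = 1 ∨ Mlist l = -1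

/-- The sum `⊕` of two tuples. -/
def oplus {N : ℕ} (a b : List (ZMod N)) : List (ZMod N) :=
  (a.head?.getD 0 + b.getLast?.getD 0) ::
    (a.tail.dropLast ++ ((a.getLast?.getD 0 + b.head?.getD 0) :: b.tail.dropLast))

/-- Equivalence: cyclic permutation of the tuple or of its reversal. -/
def EquivL {N : ℕ} (a b : List (ZMod N)) : Prop :=
  (∃ i, b = a.rotate i) ∨ (∃ i, b = a.reverse.rotate i)

/-- A solution is reducible if it is equivalent to a sum `a ⊕ b` with `b` a
solution of `(E_N)` and both sizes at least 3. -/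
def Reducible {N : ℕ} (c : List (ZMod N)) : Prop :=
  ∃ a b : List (ZMod N), 3 ≤ a.length ∧ 3 ≤ b.length ∧ IsSolL b ∧ EquivL c (oplus a b)


/-!
Choose `k ≡ 1 (mod n)` and `k ≡ 2 (mod m)`. Modulo `n` the matrix `M = [[1,-1],[1,0]]` satisfies
`M³ = -Id`, so it has order `6` (order `3` when `n = 2`, where `-Id = Id`); modulo `m` the powers
`[[2,-1],[1,0]]ᵗ = [[t+1,-t],[t,1-t]]` form a cyclic group of order `m` avoiding `-Id`. By the
Chinese remainder theorem the matrix of `k̄` has order `lcm(6 or 3, m)` and no power equal to `-Id`,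
which is the size of the minimal solution.

For reducibility: if the corner `K_{j+1}` of `[[k,-1],[1,0]]ʲ` (a continuant) is `±1`, then with
`x = K_{j+1} K_j` the tuple `(x, k, …, k, x)` with `j` middle entries is a solution, and
`(k, …, k) = (k - x, k, …, k, k - x) ⊕ (x, k, …, k, x)`. Taking `j = m` if `m ≡ 1 (mod 6)` and
`j = m - 2` if `m ≡ 5 (mod 6)` makes the corner `1`, resp. `-1`, modulo both `n` and `m`.
-/

def continuant {N : ℕ} (a : ZMod N) : ℕ → ZMod N
  | 0 => 0
  | 1 => 1
  | t + 2 => a * continuant a (t + 1) - continuant a t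

section Continuant

variable {N : ℕ} (a : ZMod N)

lemma continuant_add_two (t : ℕ) :
    continuant a (t + 2) = a * continuant a (t + 1) - continuant a t := rfl

lemma matE_pow_succ (t : ℕ) :
    matE a ^ (t + 1) = !![continuant a (t + 2), -continuant a (t + 1);
      continuant a (t + 1), -continuant a t] := by
  induction t with
  | zero => simp [matE, continuant]
  | succ t ih =>
    rw [pow_succ, ih, matE, Matrix.mul_fin_two, continuant_add_two a (t + 1),
      continuant_add_two a t]
    ext i j
    fin_cases i <;> fin_cases j <;> simp <;> ring

lemma matE_pow_apply_zero_zero (t : ℕ) : (matE a ^ t) 0 0 = continuant a (t + 1) := by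
  cases t with
  | zero => simp [continuant]
  | succ t => simp [matE_pow_succ]

lemma continuant_add_two_mul (t : ℕ) :
    continuant a (t + 2) * continuant a t = continuant a (t + 1) ^ 2 - 1 := by
  induction t with
  | zero => simp [continuant]
  | succ t ih =>
    rw [continuant_add_two a (t + 1)]
    linear_combination -continuant a (t + 2) * continuant_add_two a t + ih

end Continuant

lemma matE_mul_mul_matE {N : ℕ} {e f g : ZMod N} (he : e ^ 2 = 1) (hd : e * g = f ^ 2 - 1) :
    matE (e * f) * !![e, -f; f, -g] * matE (e * f) = -e • (1 : Matrix (Fin 2) (Fin 2) _) := by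
  ext i j
  fin_cases i <;> fin_cases j <;> simp [matE, Matrix.mul_apply, Fin.sum_univ_two]
  · linear_combination (e * f ^ 2 - g) * he + e * hd
  · linear_combination -f * he
  · linear_combination f * he

lemma Mlist_cons_replicate_concat {N : ℕ} (x a : ZMod N) (j : ℕ) :
    Mlist (x :: (List.replicate j a ++ [x])) = matE x * matE a ^ j * matE x := by
  simp [Mlist, List.reverse_replicate, List.prod_replicate, mul_assoc]

lemma isSolL_cons_replicate_concat {N : ℕ} (a : ZMod N) (j : ℕ)
    (h : continuant a (j + 2) = 1 ∨ continuant a (j + 2) = -1) :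
    IsSolL (continuant a (j + 2) * continuant a (j + 1) ::
      (List.replicate (j + 1) a ++ [continuant a (j + 2) * continuant a (j + 1)])) := by
  have he : continuant a (j + 2) ^ 2 = 1 := by rcases h with h | h <;> simp [h]
  rw [IsSolL, Mlist_cons_replicate_concat, matE_pow_succ,
    matE_mul_mul_matE he (continuant_add_two_mul a j)]
  rcases h with h | h <;> simp [h]

lemma oplus_eq_replicate {N : ℕ} (a x : ZMod N) {j r : ℕ} (h : j + 2 ≤ r) :
    oplus ((a - x) :: (List.replicate (r - j - 2) a ++ [a - x]))
      (x :: (List.replicate j a ++ [x])) = List.replicate r a := by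
  simp [oplus, List.getLast?_cons, List.eq_replicate_iff]
  exact ⟨by omega, by tauto⟩

lemma reducible_replicate {N : ℕ} (a : ZMod N) {j r : ℕ} (hj : 1 ≤ j) (hr : j + 3 ≤ r)
    (h : (matE a ^ j) 0 0 = 1 ∨ (matE a ^ j) 0 0 = -1) :
    Reducible (List.replicate r a) := by
  obtain ⟨i, rfl⟩ : ∃ i, j = i + 1 := ⟨j - 1, by omega⟩
  rw [matE_pow_apply_zero_zero] at h
  refine ⟨_, _, ?_, ?_, isSolL_cons_replicate_concat a i h,
    Or.inl ⟨0, by rw [List.rotate_zero]; exact oplus_eq_replicate a _ (by omega)⟩⟩ <;>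
    · simp only [List.length_cons, List.length_append, List.length_replicate]
      omega

lemma minMonSize_orderOf {N : ℕ} {k : ZMod N} (hpos : 0 < orderOf (matE k))
    (hneg : ∀ t, matE k ^ t ≠ -1) : minMonSize k (orderOf (matE k)) := by
  refine ⟨hpos, Or.inl (pow_orderOf_eq_one _), fun t ht hsol => ?_⟩
  exact Nat.le_of_dvd ht (orderOf_dvd_of_pow_eq_one (hsol.resolve_right (hneg t)))

lemma RingHom.mapMatrix_matE {N M : ℕ} (f : ZMod N →+* ZMod M) (a : ZMod N) :
    f.mapMatrix (matE a) = matE (f a) := by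
  ext i j
  fin_cases i <;> fin_cases j <;> simp [matE]

lemma matE_one_pow_three (n : ℕ) : matE (1 : ZMod n) ^ 3 = -1 := by
  ext i j
  fin_cases i <;> fin_cases j <;> simp [matE, pow_succ, Matrix.mul_apply, Fin.sum_univ_two]

lemma orderOf_matE_one {n : ℕ} (hn : 2 ≤ n) :
    orderOf (matE (1 : ZMod n)) = if 2 < n then 6 else 3 := by
  have : Fact (1 < n) := ⟨hn⟩
  have h3 := matE_one_pow_three n
  split_ifs with h
  · have : Fact (2 < n) := ⟨h⟩
    refine orderOf_eq_of_pow_and_pow_div_prime (by norm_num) (by rw [pow_mul _ 3 2, h3]; simp)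
      fun p hp hdvd => ?_
    obtain rfl | rfl : p = 2 ∨ p = 3 := by
      have := Nat.le_of_dvd (by norm_num) hdvd
      interval_cases p <;> simp_all +decide
    · rw [show 6 / 2 = 3 by rfl, h3]
      intro h
      exact ZMod.neg_one_ne_one (by simpa using congrFun (congrFun h 0) 0)
    · intro h2
      simpa [matE, sq, Matrix.mul_apply, Fin.sum_univ_two] using congrFun (congrFun h2 0) 0
  · obtain rfl : n = 2 := by omega
    refine orderOf_eq_prime (by rw [h3]; decide) fun h1 => ?_
    simpa [matE] using congrFun (congrFun h1 1) 0

lemma matE_two_pow {m : ℕ} (t : ℕ) :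
    matE (2 : ZMod m) ^ t = !![(t : ZMod m) + 1, -t; t, 1 - t] := by
  induction t with
  | zero => simp [Matrix.one_fin_two]
  | succ t ih =>
    rw [pow_succ, ih, matE, Matrix.mul_fin_two]
    ext i j
    fin_cases i <;> fin_cases j <;> simp <;> ring

lemma matE_two_pow_eq_one_iff {m : ℕ} (t : ℕ) : matE (2 : ZMod m) ^ t = 1 ↔ m ∣ t := by
  rw [← ZMod.natCast_eq_zero_iff, matE_two_pow, Matrix.one_fin_two]
  constructor
  · intro h
    simpa using congrFun (congrFun h 1) 0
  · intro h
    simp [h]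

lemma orderOf_matE_two (m : ℕ) : orderOf (matE (2 : ZMod m)) = m :=
  Nat.dvd_antisymm (orderOf_dvd_of_pow_eq_one ((matE_two_pow_eq_one_iff m).2 dvd_rfl))
    ((matE_two_pow_eq_one_iff _).1 (pow_orderOf_eq_one _))

lemma matE_two_pow_ne_neg_one {m : ℕ} (hm : 2 < m) (t : ℕ) : matE (2 : ZMod m) ^ t ≠ -1 := by
  intro h
  have h10 : (t : ZMod m) = 0 := by simpa [matE_two_pow] using congrFun (congrFun h 1) 0
  have h00 : (t : ZMod m) + 1 = -1 := by simpa [matE_two_pow] using congrFun (congrFun h 0) 0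
  have h2 : ((2 : ℕ) : ZMod m) = 0 := by
    rw [h10] at h00
    push_cast
    linear_combination h00
  exact absurd (Nat.le_of_dvd two_pos ((ZMod.natCast_eq_zero_iff _ _).1 h2)) (by omega)

section ChineseRemainder

variable {n m : ℕ} (hco : n.Coprime m)

def crtMatrixHom : Matrix (Fin 2) (Fin 2) (ZMod (n * m)) →+*
    Matrix (Fin 2) (Fin 2) (ZMod n) × Matrix (Fin 2) (Fin 2) (ZMod m) :=
  ((RingHom.fst _ _).comp (ZMod.chineseRemainder hco).toRingHom).mapMatrix.prod
    ((RingHom.snd _ _).comp (ZMod.chineseRemainder hco).toRingHom).mapMatrix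

lemma chineseRemainder_apply_matrix (A : Matrix (Fin 2) (Fin 2) (ZMod (n * m))) (i j : Fin 2) :
    ZMod.chineseRemainder hco (A i j) = ((crtMatrixHom hco A).1 i j, (crtMatrixHom hco A).2 i j) :=
  rfl

lemma crtMatrixHom_injective : Function.Injective (crtMatrixHom hco) := fun A B h => by
  ext i j
  apply (ZMod.chineseRemainder hco).injective
  rw [chineseRemainder_apply_matrix, chineseRemainder_apply_matrix, h]

variable {K : ZMod (n * m)}

lemma isUnit_of_chineseRemainder_eq (hK : ZMod.chineseRemainder hco K = (1, 2)) (hm : Odd m) :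
    IsUnit K := by
  rw [← isUnit_map_iff (ZMod.chineseRemainder hco), hK, Prod.isUnit_iff]
  refine ⟨isUnit_one, ?_⟩
  exact_mod_cast (ZMod.isUnit_iff_coprime 2 m).2 (Nat.coprime_two_left.2 hm)

lemma crtMatrixHom_matE_pow (hK : ZMod.chineseRemainder hco K = (1, 2)) (t : ℕ) :
    crtMatrixHom hco (matE K ^ t) = (matE 1 ^ t, matE 2 ^ t) := by
  rw [map_pow, crtMatrixHom, RingHom.prod_apply, RingHom.mapMatrix_matE,
    RingHom.mapMatrix_matE]
  simp [hK]

lemma matE_pow_ne_neg_one (hK : ZMod.chineseRemainder hco K = (1, 2)) (hm : 2 < m) (t : ℕ) :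
    matE K ^ t ≠ -1 := fun h =>
  matE_two_pow_ne_neg_one hm t <| by
    simpa [crtMatrixHom_matE_pow hco hK] using congrArg (fun A => (crtMatrixHom hco A).2) h

lemma orderOf_matE (hK : ZMod.chineseRemainder hco K = (1, 2)) (hn : 2 ≤ n) :
    orderOf (matE K) = Nat.lcm (if 2 < n then 6 else 3) m := by
  rw [← orderOf_injective (crtMatrixHom hco).toMonoidHom (crtMatrixHom_injective hco),
    RingHom.toMonoidHom_eq_coe, MonoidHom.coe_coe, ← pow_one (matE K),
    crtMatrixHom_matE_pow hco hK, pow_one, pow_one, Prod.orderOf_mk, orderOf_matE_one hn,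
    orderOf_matE_two]

lemma reducible_replicate_of_chineseRemainder (hK : ZMod.chineseRemainder hco K = (1, 2))
    (hm : 2 ≤ m) (hm6 : m % 6 = 1 ∨ m % 6 = 5) {r : ℕ} (hr : 3 * m ≤ r) :
    Reducible (List.replicate r K) := by
  have h6 : matE (1 : ZMod n) ^ 6 = 1 := by rw [pow_mul _ 3 2, matE_one_pow_three]; simp
  rcases hm6 with hm6 | hm6
  · refine reducible_replicate K (j := m) (by omega) (by omega) (Or.inl ?_)
    apply (ZMod.chineseRemainder hco).injective
    rw [chineseRemainder_apply_matrix, crtMatrixHom_matE_pow hco hK, pow_eq_pow_mod m h6, hm6,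
      matE_two_pow]
    simp [matE]
  · refine reducible_replicate K (j := m - 2) (by omega) (by omega) (Or.inr ?_)
    apply (ZMod.chineseRemainder hco).injective
    rw [chineseRemainder_apply_matrix, crtMatrixHom_matE_pow hco hK, pow_eq_pow_mod _ h6,
      show (m - 2) % 6 = 3 by omega, matE_one_pow_three, matE_two_pow, Nat.cast_sub (by omega)]
    norm_num [Prod.ext_iff]

end ChineseRemainder

theorem stmt17 (n m : ℕ) (hn : 2 ≤ n) (hm : 2 ≤ m) (hco : Nat.Coprime n m)
    (hmodd : Odd m) (hm3 : ¬ 3 ∣ m) :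
    ∃ k : ℕ, 1 ≤ k ∧ k ≤ n * m - 1 ∧ Nat.Coprime k (n * m) ∧
      minMonSize ((k : ZMod (n * m))) (if 2 < n then 6 * m else 3 * m) ∧
      Reducible (List.replicate (if 2 < n then 6 * m else 3 * m)
        ((k : ZMod (n * m)))) := by
  have : NeZero (n * m) := ⟨by positivity⟩
  have hm6 : m % 6 = 1 ∨ m % 6 = 5 := by
    have := Nat.odd_iff.mp hmodd
    omega
  obtain ⟨K, hK⟩ : ∃ K, ZMod.chineseRemainder hco K = (1, 2) :=
    ⟨_, RingEquiv.apply_symm_apply _ _⟩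
  have h3m : Nat.Coprime 3 m := (Nat.Prime.coprime_iff_not_dvd Nat.prime_three).2 hm3
  have hr : orderOf (matE K) = if 2 < n then 6 * m else 3 * m := by
    rw [orderOf_matE hco hK hn]
    split_ifs
    · exact Nat.Coprime.lcm_eq_mul (Nat.Coprime.mul_left (Nat.coprime_two_left.2 hmodd) h3m)
    · exact Nat.Coprime.lcm_eq_mul h3m
  have hcop : Nat.Coprime K.val (n * m) := by
    rw [← ZMod.isUnit_iff_coprime, ZMod.natCast_zmod_val]
    exact isUnit_of_chineseRemainder_eq hco hK hmodd
  refine ⟨K.val, Nat.pos_of_ne_zero fun h0 => ?_, by have := ZMod.val_lt K; omega, hcop, ?_, ?_⟩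
  · rw [h0, Nat.coprime_zero_left, mul_eq_one] at hcop
    omega
  · rw [ZMod.natCast_zmod_val, ← hr]
    exact minMonSize_orderOf (by rw [hr]; split_ifs <;> omega)
      (matE_pow_ne_neg_one hco hK (by omega))
  · rw [ZMod.natCast_zmod_val]
    exact reducible_replicate_of_chineseRemainder hco hK hm hm6 (by split_ifs <;> omega)
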